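/- The function G is differentiable on ℝ and its derivative is G′(β) = −β·∑_{l=1}^n ∑_{i ≠ l} ∏_{k ∉ {i, l}} (μ_k − β). In particular, if μ_1 < 0 < μ_n, then G′(β) > 0 for every β < μ_1. -/

import Mathlib

open Finset

section

variable {ι : Type*} [DecidableEq ι] (μ : ι → ℝ)

theorem hasDerivAt_prod_sub (s : Finset ι) (β : ℝ) :
    HasDerivAt (fun b => ∏ k ∈ s, (μ k - b)) (-∑ l ∈ s, ∏ k ∈ s.erase l, (μ k - β)) β := by
  have h := HasDerivAt.fun_finsetProd (u := s) (f := fun k b => μ k - b)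
    (f' := fun _ => (-1 : ℝ)) (x := β)
    (fun k _ => by simpa using (hasDerivAt_id β).const_sub (μ k))
  simpa [← Finset.sum_neg_distrib, mul_comm] using h

/-- The derivative `-∑ₗ ∏_{k ≠ l}` of the first summand cancels the term `∑ₗ ∏_{k ≠ l}` produced by
the product rule in the second one. -/
theorem hasDerivAt_prod_sub_add_mul_sum_prod_erase (s : Finset ι) (β : ℝ) :
    HasDerivAt (fun b => (∏ k ∈ s, (μ k - b)) + b * ∑ l ∈ s, ∏ k ∈ s.erase l, (μ k - b))
      (-β * ∑ l ∈ s, ∑ i ∈ s.erase l, ∏ k ∈ (s.erase l).erase i, (μ k - β)) β := by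
  have hsum : HasDerivAt (fun b => ∑ l ∈ s, ∏ k ∈ s.erase l, (μ k - b))
      (∑ l ∈ s, -∑ i ∈ s.erase l, ∏ k ∈ (s.erase l).erase i, (μ k - β)) β :=
    HasDerivAt.fun_sum fun l _ => hasDerivAt_prod_sub μ (s.erase l) β
  refine ((hasDerivAt_prod_sub μ s β).fun_add ((hasDerivAt_id β).fun_mul hsum)).congr_deriv ?_
  simp only [id_eq, one_mul, Finset.sum_neg_distrib]
  ring

theorem neg_mul_sum_sum_prod_erase_pos {s : Finset ι} (hs : 1 < #s) {β : ℝ} (hβ : β < 0)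
    (hμβ : ∀ k ∈ s, β < μ k) :
    0 < -β * ∑ l ∈ s, ∑ i ∈ s.erase l, ∏ k ∈ (s.erase l).erase i, (μ k - β) := by
  refine mul_pos (neg_pos.mpr hβ) (Finset.sum_pos (fun l hl => Finset.sum_pos (fun i _ => ?_) ?_) ?_)
  · exact Finset.prod_pos fun k hk =>
      sub_pos.mpr (hμβ k (Finset.mem_of_mem_erase (Finset.mem_of_mem_erase hk)))
  · rw [← Finset.card_pos, Finset.card_erase_of_mem hl]
    omega
  · exact Finset.card_pos.mp (by omega)

end

/-- `G` is differentiable with derivative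
`G'(β) = -β·∑ₗ ∑_{i ≠ l} ∏_{k ∉ {i,l}} (μₖ - β)`; in the mixed case `μ₁ < 0 < μₙ`
this derivative is positive for every `β < μ₁`. -/
theorem G_deriv (n : ℕ) (hn : 2 ≤ n) (μ : Fin n → ℝ) (hμ : Monotone μ)
    (G : ℝ → ℝ)
    (hG : ∀ β : ℝ, G β = (∏ k, (μ k - β)) +
      β * ∑ l, ∏ k ∈ Finset.univ.erase l, (μ k - β)) :
    (∀ β : ℝ, HasDerivAt G
      (-β * ∑ l, ∑ i ∈ Finset.univ.erase l,
        ∏ k ∈ (Finset.univ.erase l).erase i, (μ k - β)) β) ∧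
    (μ ⟨0, by omega⟩ < 0 → 0 < μ ⟨n - 1, by omega⟩ →
      ∀ β : ℝ, β < μ ⟨0, by omega⟩ →
        0 < -β * ∑ l, ∑ i ∈ Finset.univ.erase l,
          ∏ k ∈ (Finset.univ.erase l).erase i, (μ k - β)) := by
  refine ⟨fun β => funext hG ▸ hasDerivAt_prod_sub_add_mul_sum_prod_erase μ univ β,
    fun hμ0 _ β hβ => neg_mul_sum_sum_prod_erase_pos μ ?_ (hβ.trans hμ0) ?_⟩
  · rw [card_univ, Fintype.card_fin]
    omega
  · exact fun k _ => hβ.trans_le (hμ (Nat.zero_le k.val))
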